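/- arXiv:0707.1241 — 3 statements merged into one kernel-verified Lean document; each statement's English description precedes it below -/
import Mathlib

section
/- Let n ≥ 1, let q ∈ ℝ^n, and for each pair s < t in {1,…,n} let λ_{t,s} ∈ ℝ. Define the simple graph G on {1,…,n} with an edge between t and s if and only if t ≠ s and λ_{t,s} ≠ 0, and define f : ℝ^n → ℝ by f(u) = Σ_t q_t u_t + Σ_{s<t: λ_{t,s}>0} λ_{t,s}|u_t − u_s| + Σ_{s<t: λ_{t,s}<0} |λ_{t,s}| |u_t + u_s − 1|. If every edge {t,s} of G with λ_{t,s} < 0 is a bridge of G (i.e., lies on no cycle of G), then the minimum of f over the cube [0,1]^n is attained at some point x ∈ {0,1}^n; that is, there exists x ∈ {0,1}^n with f(x) ≤ f(u) for all u ∈ [0,1]^n. -/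
/-!
Reflecting the coordinates `u_t ↦ 1 - u_t` for `t` in a vertex set `S` turns
`|u_t + u_s - 1|` into `|w_t - w_s|` on the edges crossing `S` and leaves `|u_t - u_s|` unchanged
on the others. Because every negative edge is a bridge, `S` can be chosen so that the edges
crossing it are exactly the negative ones: put `v` in `S` when it lies on the distinguished side
of an odd number of negative edges. After the reflection `f` is, up to a constant, a linear form
plus a weighted sum of `|w_t - w_s|`, and such a function is the average over `θ ∈ [0, 1]` of its
values at the 0-1 vectors `t ↦ [θ ≤ w_t]`, so its minimum over the cube is attained at a 0-1 point.
-/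

namespace SimpleGraph

variable {V : Type*} {G : SimpleGraph V}

theorem IsBridge.reachable_iff_reachable_iff_ne {e : Sym2 V} (he : G.IsBridge e) {x u v : V}
    (hx : x ∈ e) (huv : G.Adj u v) :
    ((G.deleteEdges {e}).Reachable x u ↔ (G.deleteEdges {e}).Reachable x v) ↔ s(u, v) ≠ e := by
  by_cases h : s(u, v) = e
  · subst h
    have hbr : ¬(G.deleteEdges {s(u, v)}).Reachable u v := he
    rcases Sym2.mem_iff.1 hx with rfl | rfl
    · simpa using hbr
    · simpa [reachable_comm] using hbr
  · have hadj : (G.deleteEdges {e}).Adj u v := by simp [huv, h]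
    simp only [ne_eq, h, not_false_eq_true, iff_true]
    exact ⟨fun hu => hu.trans hadj.reachable, fun hv => hv.trans hadj.symm.reachable⟩

theorem exists_crossing_set_of_forall_isBridge [Finite V] (H : SimpleGraph V)
    (hH : ∀ e ∈ H.edgeSet, G.IsBridge e) :
    ∃ S : Set V, ∀ ⦃u v⦄, G.Adj u v → ((u ∈ S ↔ v ∈ S) ↔ ¬H.Adj u v) := by
  classical
  have := Fintype.ofFinite V
  -- the parity of the number of edges `e` of `H` with `v` on the side of `e.out.1` in `G - e`
  let σ : V → ZMod 2 := fun v =>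
    ∑ e ∈ H.edgeFinset, if (G.deleteEdges {e}).Reachable e.out.1 v then 1 else 0
  refine ⟨{v | σ v = 1}, fun u v huv => ?_⟩
  have hsub : σ u - σ v = if s(u, v) ∈ H.edgeFinset then 1 else 0 := by
    rw [← Finset.sum_sub_distrib,
      ← Finset.sum_ite_eq' H.edgeFinset s(u, v) fun _ => (1 : ZMod 2)]
    refine Finset.sum_congr rfl fun e he => ?_
    have key := (hH e (mem_edgeFinset.1 he)).reachable_iff_reachable_iff_ne e.out_fst_mem huv
    split_ifs <;> simp_all [eq_comm]
  have hZ : ∀ a b : ZMod 2, (a = 1 ↔ b = 1) ↔ a - b = 0 := by decide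
  simp only [Set.mem_ofPred_eq, hZ, hsub, mem_edgeFinset, mem_edgeSet]
  split_ifs <;> simp_all

end SimpleGraph

open MeasureTheory Set

theorem intervalIntegrable_indicator_Iic (a : ℝ) :
    IntervalIntegrable (fun θ => (Iic a).indicator (1 : ℝ → ℝ) θ) volume 0 1 := by
  refine Antitone.intervalIntegrable fun x y hxy => ?_
  by_cases hy : y ≤ a
  · simp [hy, hxy.trans hy]
  · simp only [indicator_apply, mem_Iic, hy, if_false, Pi.one_apply]
    split_ifs <;> norm_num

theorem intervalIntegral_indicator_Iic {a : ℝ} (ha : a ∈ Icc (0 : ℝ) 1) :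
    ∫ θ in (0 : ℝ)..1, (Iic a).indicator (1 : ℝ → ℝ) θ = a := by
  rw [← Iic_def, intervalIntegral.integral_indicator ha]
  simp

theorem abs_indicator_Iic_sub_indicator_Iic (a b θ : ℝ) :
    |(Iic a).indicator (1 : ℝ → ℝ) θ - (Iic b).indicator 1 θ|
      = (Iic (max a b)).indicator 1 θ - (Iic (min a b)).indicator 1 θ := by
  simp only [indicator_apply, mem_Iic, le_max_iff, le_min_iff, Pi.one_apply]
  split_ifs <;> grind

theorem intervalIntegrable_fun_sum {κ : Type*} (s : Finset κ) {f : κ → ℝ → ℝ} {a b : ℝ}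
    (h : ∀ i ∈ s, IntervalIntegrable (f i) volume a b) :
    IntervalIntegrable (fun θ => ∑ i ∈ s, f i θ) volume a b := by
  simpa only [Finset.sum_fn] using IntervalIntegrable.sum s h

section CutEnergy

variable {ι : Type*} [Fintype ι]

def cutEnergy (r : ι → ℝ) (μ : ι → ι → ℝ) (w : ι → ℝ) : ℝ :=
  ∑ t, r t * w t + ∑ t, ∑ s, μ t s * |w t - w s|

noncomputable def threshold (w : ι → ℝ) (θ : ℝ) : ι → ℝ :=
  fun t => (Iic (w t)).indicator 1 θ

variable (r : ι → ℝ) (μ : ι → ι → ℝ)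

theorem cutEnergy_threshold (w : ι → ℝ) (θ : ℝ) :
    cutEnergy r μ (threshold w θ) = ∑ t, r t * (Iic (w t)).indicator 1 θ
      + ∑ t, ∑ s, μ t s *
        ((Iic (max (w t) (w s))).indicator 1 θ - (Iic (min (w t) (w s))).indicator 1 θ) := by
  simp only [cutEnergy, threshold, abs_indicator_Iic_sub_indicator_Iic]

theorem intervalIntegrable_cutEnergy_threshold (w : ι → ℝ) :
    IntervalIntegrable (fun θ => cutEnergy r μ (threshold w θ)) volume 0 1 := by
  simp only [cutEnergy_threshold]
  exact
    (intervalIntegrable_fun_sum _ fun t _ => (intervalIntegrable_indicator_Iic _).const_mul _).add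
    (intervalIntegrable_fun_sum _ fun t _ => intervalIntegrable_fun_sum _ fun s _ =>
      ((intervalIntegrable_indicator_Iic _).sub (intervalIntegrable_indicator_Iic _)).const_mul _)

theorem integral_cutEnergy_threshold {w : ι → ℝ} (hw : ∀ t, w t ∈ Icc (0 : ℝ) 1) :
    ∫ θ in (0 : ℝ)..1, cutEnergy r μ (threshold w θ) = cutEnergy r μ w := by
  have hlin t : IntervalIntegrable (fun θ => r t * (Iic (w t)).indicator 1 θ) volume 0 1 :=
    (intervalIntegrable_indicator_Iic _).const_mul _
  have hpair t s : IntervalIntegrable (fun θ => μ t s *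
      ((Iic (max (w t) (w s))).indicator 1 θ - (Iic (min (w t) (w s))).indicator 1 θ))
      volume 0 1 :=
    ((intervalIntegrable_indicator_Iic _).sub (intervalIntegrable_indicator_Iic _)).const_mul _
  have hpairs t := intervalIntegrable_fun_sum Finset.univ fun s _ => hpair t s
  have hmax t s : max (w t) (w s) ∈ Icc (0 : ℝ) 1 :=
    ⟨le_max_of_le_left (hw t).1, max_le (hw t).2 (hw s).2⟩
  have hmin t s : min (w t) (w s) ∈ Icc (0 : ℝ) 1 :=
    ⟨le_min (hw t).1 (hw s).1, min_le_of_left_le (hw t).2⟩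
  simp only [cutEnergy_threshold]
  rw [intervalIntegral.integral_add (intervalIntegrable_fun_sum _ fun t _ => hlin t)
      (intervalIntegrable_fun_sum _ fun t _ => hpairs t),
    intervalIntegral.integral_finsetSum fun t _ => hlin t,
    intervalIntegral.integral_finsetSum fun t _ => hpairs t]
  simp only [intervalIntegral.integral_finsetSum fun s _ => hpair _ s,
    intervalIntegral.integral_const_mul,
    intervalIntegral.integral_sub (intervalIntegrable_indicator_Iic _)
      (intervalIntegrable_indicator_Iic _),
    intervalIntegral_indicator_Iic (hw _), intervalIntegral_indicator_Iic (hmax _ _),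
    intervalIntegral_indicator_Iic (hmin _ _), max_sub_min_eq_abs', cutEnergy]

theorem exists_binary_le_cutEnergy :
    ∃ y : ι → ℝ, (∀ t, y t = 0 ∨ y t = 1) ∧
      ∀ w : ι → ℝ, (∀ t, w t ∈ Icc (0 : ℝ) 1) → cutEnergy r μ y ≤ cutEnergy r μ w := by
  have hfin : {y : ι → ℝ | ∀ t, y t ∈ ({0, 1} : Set ℝ)}.Finite :=
    Set.Finite.pi' fun _ => toFinite _
  obtain ⟨y, hy, hmin⟩ := Set.exists_min_image _ (cutEnergy r μ) hfin ⟨0, fun _ => by simp⟩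
  refine ⟨y, by simpa using hy, fun w hw => ?_⟩
  have hbin θ : threshold w θ ∈ {y : ι → ℝ | ∀ t, y t ∈ ({0, 1} : Set ℝ)} := fun t => by
    by_cases h : θ ≤ w t <;> simp [threshold, h]
  calc cutEnergy r μ y = ∫ _ in (0 : ℝ)..1, cutEnergy r μ y := by simp
    _ ≤ ∫ θ in (0 : ℝ)..1, cutEnergy r μ (threshold w θ) :=
      intervalIntegral.integral_mono_on zero_le_one intervalIntegrable_const
        (intervalIntegrable_cutEnergy_threshold r μ w) fun θ _ => hmin _ (hbin θ)
    _ = cutEnergy r μ w := integral_cutEnergy_threshold r μ hw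

end CutEnergy

section Reflection

variable {ι : Type*} (S : Set ι) [DecidablePred (· ∈ S)]

def reflectOn (w : ι → ℝ) : ι → ℝ := S.piecewise (1 - w) w

theorem reflectOn_reflectOn (w : ι → ℝ) : reflectOn S (reflectOn S w) = w := by
  funext t
  by_cases h : t ∈ S <;> simp [reflectOn, h]

theorem reflectOn_mem_Icc {w : ι → ℝ} {t : ι} (hw : w t ∈ Icc (0 : ℝ) 1) :
    reflectOn S w t ∈ Icc (0 : ℝ) 1 := by
  by_cases h : t ∈ S <;> simp [reflectOn, h, hw.1, hw.2]

theorem reflectOn_eq_zero_or_one {w : ι → ℝ} {t : ι} (hw : w t = 0 ∨ w t = 1) :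
    reflectOn S w t = 0 ∨ reflectOn S w t = 1 := by
  by_cases h : t ∈ S <;> rcases hw with hw | hw <;> simp [reflectOn, h, hw]

theorem abs_reflectOn_sub_of_iff (w : ι → ℝ) {t s : ι} (h : t ∈ S ↔ s ∈ S) :
    |reflectOn S w t - reflectOn S w s| = |w t - w s| := by
  by_cases ht : t ∈ S
  · simp only [reflectOn, piecewise_eq_of_mem _ _ _ ht, piecewise_eq_of_mem _ _ _ (h.1 ht),
      Pi.sub_apply, Pi.one_apply]
    rw [← abs_neg]; ring_nf
  · simp [reflectOn, ht, mt h.2 ht]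

theorem abs_reflectOn_sub_of_not_iff (w : ι → ℝ) {t s : ι} (h : ¬(t ∈ S ↔ s ∈ S)) :
    |reflectOn S w t - reflectOn S w s| = |w t + w s - 1| := by
  by_cases ht : t ∈ S
  · have hs : s ∉ S := fun hs => h (iff_of_true ht hs)
    simp only [reflectOn, piecewise_eq_of_mem _ _ _ ht, piecewise_eq_of_notMem _ _ _ hs,
      Pi.sub_apply, Pi.one_apply]
    rw [← abs_neg]; ring_nf
  · have hs : s ∈ S := by tauto
    simp only [reflectOn, piecewise_eq_of_mem _ _ _ hs, piecewise_eq_of_notMem _ _ _ ht,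
      Pi.sub_apply, Pi.one_apply]
    ring_nf

theorem mul_eq_indicator_add_piecewise_mul_reflectOn (q w : ι → ℝ) (t : ι) :
    q t * w t = S.indicator q t + S.piecewise (-q) q t * reflectOn S w t := by
  by_cases h : t ∈ S <;> simp [reflectOn, h]; ring

end Reflection

section LPObjective

variable {ι : Type*} [Fintype ι] [LinearOrder ι]

noncomputable def lpObjective (q : ι → ℝ) (lam : ι → ι → ℝ) (u : ι → ℝ) : ℝ :=
  (∑ t, q t * u t)
    + (∑ t, ∑ s, if s < t ∧ 0 < lam t s then lam t s * |u t - u s| else 0)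
    + (∑ t, ∑ s, if s < t ∧ lam t s < 0 then |lam t s| * |u t + u s - 1| else 0)

variable (q : ι → ℝ) (lam : ι → ι → ℝ) (S : Set ι) [DecidablePred (· ∈ S)]

theorem lpObjective_eq_cutEnergy_reflectOn
    (hpos : ∀ t s, s < t → 0 < lam t s → (t ∈ S ↔ s ∈ S))
    (hneg : ∀ t s, s < t → lam t s < 0 → ¬(t ∈ S ↔ s ∈ S)) (u : ι → ℝ) :
    lpObjective q lam u = ∑ t, S.indicator q t
      + cutEnergy (S.piecewise (-q) q) (fun t s => if s < t then |lam t s| else 0)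
        (reflectOn S u) := by
  have hlin : ∑ t, q t * u t
      = ∑ t, S.indicator q t + ∑ t, S.piecewise (-q) q t * reflectOn S u t := by
    rw [← Finset.sum_add_distrib]
    exact Finset.sum_congr rfl fun t _ => mul_eq_indicator_add_piecewise_mul_reflectOn S q u t
  have hpair t s : ((if s < t ∧ 0 < lam t s then lam t s * |u t - u s| else 0)
      + if s < t ∧ lam t s < 0 then |lam t s| * |u t + u s - 1| else 0)
      = (if s < t then |lam t s| else 0) * |reflectOn S u t - reflectOn S u s| := by
    by_cases hst : s < t
    · rcases lt_trichotomy (lam t s) 0 with hl | hl | hl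
      · simp [hst, hl, hl.not_gt, abs_reflectOn_sub_of_not_iff S u (hneg t s hst hl)]
      · simp [hl]
      · simp [hst, hl, hl.not_gt, abs_of_pos hl, abs_reflectOn_sub_of_iff S u (hpos t s hst hl)]
    · simp [hst]
  simp only [lpObjective, cutEnergy, hlin, ← hpair, Finset.sum_add_distrib]
  ring

theorem exists_binary_le_lpObjective
    (hpos : ∀ t s, s < t → 0 < lam t s → (t ∈ S ↔ s ∈ S))
    (hneg : ∀ t s, s < t → lam t s < 0 → ¬(t ∈ S ↔ s ∈ S)) :
    ∃ x : ι → ℝ, (∀ t, x t = 0 ∨ x t = 1) ∧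
      ∀ u : ι → ℝ, (∀ t, u t ∈ Icc (0 : ℝ) 1) → lpObjective q lam x ≤ lpObjective q lam u := by
  obtain ⟨y, hy, hmin⟩ := exists_binary_le_cutEnergy (S.piecewise (-q) q)
    (fun t s => if s < t then |lam t s| else 0)
  refine ⟨reflectOn S y, fun t => reflectOn_eq_zero_or_one S (hy t), fun u hu => ?_⟩
  simp only [lpObjective_eq_cutEnergy_reflectOn q lam S hpos hneg, reflectOn_reflectOn]
  gcongr
  exact hmin _ fun t => reflectOn_mem_Icc S (hu t)

end LPObjective

theorem lp_detection_integral_optimum_of_WNC_general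
    (n : ℕ) (q : Fin n → ℝ) (lam : Fin n → Fin n → ℝ)
    (G : SimpleGraph (Fin n))
    (hG : ∀ t s : Fin n, G.Adj t s ↔ t ≠ s ∧ lam (max t s) (min t s) ≠ 0)
    (hbridge : ∀ t s : Fin n, s < t → lam t s < 0 → G.IsBridge s(t, s))
    (f : (Fin n → ℝ) → ℝ)
    (hf : ∀ u : Fin n → ℝ, f u =
        (∑ t, q t * u t)
        + (∑ t, ∑ s, if s < t ∧ 0 < lam t s then lam t s * |u t - u s| else 0)
        + (∑ t, ∑ s, if s < t ∧ lam t s < 0 then |lam t s| * |u t + u s - 1| else 0)) :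
    ∃ x : Fin n → ℝ, (∀ t, x t = 0 ∨ x t = 1) ∧
      ∀ u : Fin n → ℝ, (∀ t, u t ∈ Set.Icc (0:ℝ) 1) → f x ≤ f u := by
  classical
  let H := SimpleGraph.fromRel fun t s : Fin n => s < t ∧ lam t s < 0
  have hH : ∀ e ∈ H.edgeSet, G.IsBridge e := by
    refine Sym2.ind fun a b hab => ?_
    rcases (SimpleGraph.fromRel_adj _ a b).1 ((SimpleGraph.mem_edgeSet _).1 hab) with
      ⟨-, ⟨hba, hl⟩ | ⟨hab', hl⟩⟩
    · exact hbridge a b hba hl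
    · exact Sym2.eq_swap ▸ hbridge b a hab' hl
  obtain ⟨S, hS⟩ := G.exists_crossing_set_of_forall_isBridge H hH
  have hGadj : ∀ t s, s < t → lam t s ≠ 0 → G.Adj t s := fun t s hst hl =>
    (hG t s).2 ⟨hst.ne', by rwa [max_eq_left hst.le, min_eq_right hst.le]⟩
  have hHadj : ∀ t s, s < t → (H.Adj t s ↔ lam t s < 0) := fun t s hst => by
    simp [H, hst, hst.ne', hst.not_gt]
  obtain ⟨x, hx, hmin⟩ := exists_binary_le_lpObjective q lam S
    (fun t s hst hl => (hS (hGadj t s hst hl.ne')).2 fun h => ((hHadj t s hst).1 h).not_gt hl)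
    (fun t s hst hl h => (hS (hGadj t s hst hl.ne)).1 h ((hHadj t s hst).2 hl))
  exact ⟨x, hx, fun u hu => by simpa only [hf, lpObjective] using hmin u hu⟩

/-- **Sufficiency direction of Theorem 1 (WNC ⇒ integral LP optimum).**
If every edge of the dependence graph `G` carrying a negative coefficient
`λ_{t,s}` is a bridge of `G` (lies on no cycle), then the projected LP objective
`f` attains its minimum over the cube `[0,1]^n` at a 0-1 point. -/
theorem lp_detection_integral_optimum_of_WNC
    (n : ℕ) (hn : 1 ≤ n) (q : Fin n → ℝ) (lam : Fin n → Fin n → ℝ)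
    (G : SimpleGraph (Fin n))
    (hG : ∀ t s : Fin n, G.Adj t s ↔ t ≠ s ∧ lam (max t s) (min t s) ≠ 0)
    (hbridge : ∀ t s : Fin n, s < t → lam t s < 0 → G.IsBridge s(t, s))
    (f : (Fin n → ℝ) → ℝ)
    (hf : ∀ u : Fin n → ℝ, f u =
        (∑ t, q t * u t)
        + (∑ t, ∑ s, if s < t ∧ 0 < lam t s then lam t s * |u t - u s| else 0)
        + (∑ t, ∑ s, if s < t ∧ lam t s < 0 then |lam t s| * |u t + u s - 1| else 0)) :
    ∃ x : Fin n → ℝ, (∀ t, x t = 0 ∨ x t = 1) ∧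
      ∀ u : Fin n → ℝ, (∀ t, u t ∈ Set.Icc (0:ℝ) 1) → f x ≤ f u :=
  lp_detection_integral_optimum_of_WNC_general n q lam G hG hbridge f hf
end

section
/- Let n ≥ 1 and for each pair s < t in {1,…,n} let λ_{t,s} ∈ ℝ. Define the simple graph G on {1,…,n} with an edge between t and s iff t ≠ s and λ_{t,s} ≠ 0, and define f₀ : ℝ^n → ℝ by f₀(u) = Σ_{s<t: λ_{t,s}>0} λ_{t,s}|u_t − u_s| + Σ_{s<t: λ_{t,s}<0} |λ_{t,s}| |u_t + u_s − 1| (the projected LP objective with q = 0). If G contains a cycle along which the number of edges {t,s} with λ_{t,s} < 0 is odd, then f₀(u) = 0 for u = (1/2,…,1/2), while f₀(x) > 0 for every x ∈ {0,1}^n. Consequently the minimum of f₀ over [0,1]^n is 0 and it is not attained at any integral point. -/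
/-!
At a 0-1 point `x` where the objective vanishes, every positive edge joins equal bits and
every negative edge joins complementary bits. Reading `x` as a 2-colouring, the negative edges
are exactly those whose endpoints get different colours, so every closed walk crosses an even
number of them, contradicting the odd cycle. The all-`1/2` point makes every term vanish.
-/

open Finset

namespace SimpleGraph.Walk

variable {V : Type*} {G : SimpleGraph V}

theorem even_countP_edges_iff (b : V → Bool) (neg : Sym2 V → Bool)
    (h : ∀ a c, G.Adj a c → neg s(a, c) = (b a != b c)) {u w : V} (p : G.Walk u w) :
    Even (p.edges.countP neg) ↔ b u = b w := by
  induction p with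
  | nil => simp
  | @cons u v w hadj q ih =>
    rw [edges_cons, List.countP_cons, h u v hadj]
    revert ih
    cases b u <;> cases b v <;> cases b w <;> simp [Nat.even_add_one]

theorem not_odd_countP_edges_of_closed (b : V → Bool) (neg : Sym2 V → Bool)
    (h : ∀ a c, G.Adj a c → neg s(a, c) = (b a != b c)) {v : V} (p : G.Walk v v) :
    ¬ Odd (p.edges.countP neg) :=
  Nat.not_odd_iff_even.2 ((p.even_countP_edges_iff b neg h).2 rfl)

end SimpleGraph.Walk

theorem Fintype.sum_sum_eq_zero_iff_of_nonneg {ι κ M : Type*} [Fintype ι] [Fintype κ]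
    [AddCommMonoid M] [PartialOrder M] [IsOrderedAddMonoid M] {f : ι → κ → M}
    (hf : ∀ i j, 0 ≤ f i j) : ∑ i, ∑ j, f i j = 0 ↔ ∀ i j, f i j = 0 := by
  simp [Finset.sum_eq_zero_iff_of_nonneg, Finset.sum_nonneg, hf]

section ProjectedObjective

variable {ι : Type*} [Fintype ι] [LinearOrder ι] (lam : ι → ι → ℝ) (u : ι → ℝ)

noncomputable def attractiveCost : ℝ :=
  ∑ t, ∑ s, if s < t ∧ 0 < lam t s then lam t s * |u t - u s| else 0

noncomputable def repulsiveCost : ℝ :=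
  ∑ t, ∑ s, if s < t ∧ lam t s < 0 then |lam t s| * |u t + u s - 1| else 0

omit [Fintype ι] in
lemma attractiveCost_term_nonneg (t s : ι) :
    0 ≤ if s < t ∧ 0 < lam t s then lam t s * |u t - u s| else 0 := by
  split_ifs with h
  exacts [mul_nonneg h.2.le (abs_nonneg _), le_rfl]

omit [Fintype ι] in
lemma repulsiveCost_term_nonneg (t s : ι) :
    0 ≤ if s < t ∧ lam t s < 0 then |lam t s| * |u t + u s - 1| else 0 := by
  split_ifs
  exacts [by positivity, le_rfl]

lemma attractiveCost_nonneg : 0 ≤ attractiveCost lam u :=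
  sum_nonneg fun t _ => sum_nonneg fun s _ => attractiveCost_term_nonneg lam u t s

lemma repulsiveCost_nonneg : 0 ≤ repulsiveCost lam u :=
  sum_nonneg fun t _ => sum_nonneg fun s _ => repulsiveCost_term_nonneg lam u t s

lemma attractiveCost_const (c : ℝ) : attractiveCost lam (fun _ => c) = 0 := by
  simp [attractiveCost]

lemma repulsiveCost_const_half : repulsiveCost lam (fun _ => 1 / 2) = 0 := by
  norm_num [repulsiveCost]

variable {lam u}

lemma apply_eq_of_attractiveCost_eq_zero (h : attractiveCost lam u = 0) {a c : ι} (hac : a ≠ c)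
    (hl : 0 < lam (max a c) (min a c)) : u a = u c := by
  have hterm := (Fintype.sum_sum_eq_zero_iff_of_nonneg (attractiveCost_term_nonneg lam u)).1 h
    (max a c) (min a c)
  rw [if_pos ⟨min_lt_max.2 hac, hl⟩, mul_eq_zero, abs_eq_zero, sub_eq_zero] at hterm
  rcases hterm with hl0 | heq
  · exact absurd hl0 hl.ne'
  · rcases le_total a c with hle | hle
    · simpa [hle] using heq.symm
    · simpa [hle] using heq

lemma apply_add_apply_eq_one_of_repulsiveCost_eq_zero (h : repulsiveCost lam u = 0) {a c : ι}
    (hac : a ≠ c) (hl : lam (max a c) (min a c) < 0) : u a + u c = 1 := by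
  have hterm := (Fintype.sum_sum_eq_zero_iff_of_nonneg (repulsiveCost_term_nonneg lam u)).1 h
    (max a c) (min a c)
  rw [if_pos ⟨min_lt_max.2 hac, hl⟩, mul_eq_zero, abs_eq_zero, abs_eq_zero, sub_eq_zero] at hterm
  rcases hterm with hl0 | hsum
  · exact absurd hl0 hl.ne
  · rcases le_total a c with hle | hle
    · simpa [hle, add_comm] using hsum
    · simpa [hle] using hsum

end ProjectedObjective

lemma decide_neg_eq_bne_of_binary {l a c : ℝ} (ha : a = 0 ∨ a = 1) (hc : c = 0 ∨ c = 1)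
    (hl : l ≠ 0) (hpos : 0 < l → a = c) (hneg : l < 0 → a + c = 1) :
    decide (l < 0) = (decide (a = 1) != decide (c = 1)) := by
  rcases hl.lt_or_gt with hl | hl
  · have := hneg hl
    rcases ha with rfl | rfl <;> rcases hc with rfl | rfl <;> norm_num at this <;> simp [hl]
  · have := hpos hl
    rcases ha with rfl | rfl <;> rcases hc with rfl | rfl <;> norm_num at this <;> simp [hl.not_gt]

/-- **Necessity direction of Theorem 1.** If the dependence graph contains a cycle
along which the number of negative-coefficient edges is odd, then the projected LP
objective `f₀` (with `q = 0`) vanishes at the all-`1/2` point, is nonnegative on the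
cube, and is strictly positive at every 0-1 point; hence its minimum over `[0,1]^n`
is `0` and is not attained at any integral point. -/
theorem lp_detection_fails_of_odd_negative_cycle
    (n : ℕ) (lam : Fin n → Fin n → ℝ)
    (G : SimpleGraph (Fin n))
    (hG : ∀ t s : Fin n, G.Adj t s ↔ t ≠ s ∧ lam (max t s) (min t s) ≠ 0)
    (hcycle : ∃ (v : Fin n) (p : G.Walk v v), p.IsCycle ∧
      Odd (p.edges.countP (fun e =>
        decide (Sym2.lift ⟨fun t s => lam (max t s) (min t s),
          fun t s => by simp only [sup_comm, inf_comm]⟩ e < 0))))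
    (f₀ : (Fin n → ℝ) → ℝ)
    (hf₀ : ∀ u : Fin n → ℝ, f₀ u =
        (∑ t, ∑ s, if s < t ∧ 0 < lam t s then lam t s * |u t - u s| else 0)
        + (∑ t, ∑ s, if s < t ∧ lam t s < 0 then |lam t s| * |u t + u s - 1| else 0)) :
    f₀ (fun _ => 1/2) = 0 ∧
    (∀ u : Fin n → ℝ, (∀ t, u t ∈ Set.Icc (0:ℝ) 1) → 0 ≤ f₀ u) ∧
    (∀ x : Fin n → ℝ, (∀ t, x t = 0 ∨ x t = 1) → 0 < f₀ x) := by
  have hf : ∀ u, f₀ u = attractiveCost lam u + repulsiveCost lam u := hf₀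
  have hnonneg : ∀ u, 0 ≤ f₀ u := fun u =>
    hf u ▸ add_nonneg (attractiveCost_nonneg lam u) (repulsiveCost_nonneg lam u)
  refine ⟨by rw [hf, attractiveCost_const, repulsiveCost_const_half, add_zero], fun u _ => hnonneg u, fun x hx => (hnonneg x).lt_of_ne fun hzero => ?_⟩
  rw [eq_comm, hf, add_eq_zero_iff_of_nonneg (attractiveCost_nonneg lam x)
    (repulsiveCost_nonneg lam x)] at hzero
  obtain ⟨v, p, -, hodd⟩ := hcycle
  refine p.not_odd_countP_edges_of_closed (fun t => decide (x t = 1)) _ (fun a c hadj => ?_) hodd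
  obtain ⟨hac, hl⟩ := (hG a c).1 hadj
  rw [Sym2.lift_mk]
  exact decide_neg_eq_bne_of_binary (hx a) (hx c) hl
    (apply_eq_of_attractiveCost_eq_zero hzero.1 hac)
    (apply_add_apply_eq_one_of_repulsiveCost_eq_zero hzero.2 hac)
end

section
/- Let μ ≥ 1 and h_0, …, h_μ ∈ ℝ with not all h_i zero, and define λ_j = −Σ_{i=0}^{μ−j} h_i h_{i+j} for j = 0, …, μ (so λ_0 = −Σ_i h_i² < 0). If λ_j ≥ 0 for all j = 1, …, μ (the Nonnegativity Condition), then the LP distance δ_∞ = ( |λ_0| − Σ_{j=1}^{μ} |λ_j| ) / |λ_0| satisfies δ_∞ ≥ 1/2. -/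
/-!
Under the Nonnegativity Condition `Σ_{j ≥ 1} |λ_j| = -Σ_{j ≥ 1} λ_j`, so `δ_∞ ≥ 1/2` reduces to
`Σ_i h_i² + 2 Σ_{j ≥ 1} Σ_i h_i h_{i+j} ≥ 0`, and the left side is exactly `(Σ_i h_i)²`.
-/

open Finset

/-- In the paper's notation `autocorr h μ j = -λ_j`. -/
noncomputable def autocorr (h : ℕ → ℝ) (μ j : ℕ) : ℝ :=
  ∑ i ∈ range (μ - j + 1), h i * h (i + j)

lemma sq_sum_range_eq (h : ℕ → ℝ) (n : ℕ) :
    (∑ i ∈ range n, h i) ^ 2 =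
      ∑ i ∈ range n, h i * h i + 2 * ∑ k ∈ range n, ∑ i ∈ range k, h i * h k := by
  induction n with
  | zero => simp
  | succ n ih =>
    rw [sum_range_succ, add_sq, ih, sum_range_succ (fun i => h i * h i),
      sum_range_succ (fun k => ∑ i ∈ range k, h i * h k), ← sum_mul]
    ring

lemma sum_autocorr_Icc_eq (h : ℕ → ℝ) (μ : ℕ) :
    ∑ j ∈ Icc 1 μ, autocorr h μ j = ∑ k ∈ range (μ + 1), ∑ i ∈ range k, h i * h k := by
  simp only [autocorr]
  rw [sum_sigma', sum_sigma']
  refine sum_nbij' (fun p => ⟨p.2 + p.1, p.2⟩) (fun q => ⟨q.1 - q.2, q.2⟩) ?_ ?_ ?_ ?_ ?_ <;>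
    rintro ⟨a, b⟩ hp <;> simp_all <;> omega

lemma sq_sum_range_eq_autocorr (h : ℕ → ℝ) (μ : ℕ) :
    (∑ i ∈ range (μ + 1), h i) ^ 2 = autocorr h μ 0 + 2 * ∑ j ∈ Icc 1 μ, autocorr h μ j := by
  rw [sum_autocorr_Icc_eq, sq_sum_range_eq]
  simp [autocorr]

lemma autocorr_zero_pos (h : ℕ → ℝ) {μ : ℕ} (hnonzero : ∃ i ≤ μ, h i ≠ 0) :
    0 < autocorr h μ 0 := by
  obtain ⟨i, hi, hne⟩ := hnonzero
  calc 0 < h i * h i := mul_self_pos.2 hne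
    _ ≤ autocorr h μ 0 :=
      single_le_sum (f := fun i => h i * h i) (fun _ _ => mul_self_nonneg _)
        (mem_range.2 (by omega))

theorem lp_distance_ge_half_of_NC_general
    (μ : ℕ) (h : ℕ → ℝ)
    (hnonzero : ∃ i ≤ μ, h i ≠ 0)
    (lam : ℕ → ℝ)
    (hlam : ∀ j ≤ μ, lam j = -(∑ i ∈ Finset.range (μ - j + 1), h i * h (i + j)))
    (hNC : ∀ j, 1 ≤ j → j ≤ μ → 0 ≤ lam j) :
    (1 : ℝ) / 2 ≤ (|lam 0| - ∑ j ∈ Finset.Icc 1 μ, |lam j|) / |lam 0| := by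
  have hpos := autocorr_zero_pos h hnonzero
  have habs0 : |lam 0| = autocorr h μ 0 := by
    rw [hlam 0 (Nat.zero_le μ), abs_neg, ← autocorr, abs_of_pos hpos]
  have hsum : ∑ j ∈ Icc 1 μ, |lam j| = -∑ j ∈ Icc 1 μ, autocorr h μ j := by
    rw [← sum_neg_distrib]
    refine sum_congr rfl fun j hj => ?_
    obtain ⟨hj1, hjμ⟩ := mem_Icc.1 hj
    rw [abs_of_nonneg (hNC j hj1 hjμ), hlam j hjμ, autocorr]
  have hsq := sq_nonneg (∑ i ∈ range (μ + 1), h i)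
  rw [sq_sum_range_eq_autocorr] at hsq
  rw [habs0, hsum, le_div_iff₀ hpos]
  linarith

/-- **Lemma 4.** For a nonzero impulse response `h_0, …, h_μ` with state
coefficients `λ_j = −Σ_{i=0}^{μ−j} h_i h_{i+j}` (so `λ_0 = −Σ_i h_i² < 0`)
satisfying the Nonnegativity Condition `λ_j ≥ 0` for `j = 1, …, μ`, the LP
distance `δ_∞ = (|λ_0| − Σ_{j=1}^{μ}|λ_j|) / |λ_0|` is at least `1/2`. -/
theorem lp_distance_ge_half_of_NC
    (μ : ℕ) (hμ : 1 ≤ μ) (h : ℕ → ℝ)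
    (hnonzero : ∃ i ≤ μ, h i ≠ 0)
    (lam : ℕ → ℝ)
    (hlam : ∀ j ≤ μ, lam j = -(∑ i ∈ Finset.range (μ - j + 1), h i * h (i + j)))
    (hNC : ∀ j, 1 ≤ j → j ≤ μ → 0 ≤ lam j) :
    (1 : ℝ) / 2 ≤ (|lam 0| - ∑ j ∈ Finset.Icc 1 μ, |lam j|) / |lam 0| :=
  lp_distance_ge_half_of_NC_general μ h hnonzero lam hlam hNC
end
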